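/- Let G be a finite solvable A-group, let p be a prime, let F = F(G) be the Fitting subgroup of G and F_2 = F_2(G) the second Fitting subgroup (so F_2/F = F(G/F)). If g ∈ F_2 is such that Ind(F_2, g) is a power of p, then p does not divide Ind(G/F, gF), i.e. Ind(G/F, gF)_p = 1. -/

import Mathlib

/-!
Common definitions: the set `N(G)` of conjugacy class sizes, `A`-groups,
the largest `p`-power `|G||_p` dividing an element of `N(G)`, the Fitting subgroup,
and the natural conjugation action of `G ⧸ H` on an abelian normal subgroup `H`
(used to form the semidirect product `H ⋊ G/H`).
-/

/-- `N(G)`: the set of conjugacy class sizes (indices of centralizers) of `G`. -/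
def indexSet (G : Type*) [Group G] : Set ℕ :=
  {n | ∃ x : G, n = (Subgroup.centralizer {x}).index}

/-- A finite group is an `A`-group if all its Sylow subgroups are abelian. -/
def IsAGroup (G : Type*) [Group G] : Prop :=
  ∀ (p : ℕ), p.Prime → ∀ P : Sylow p G, ∀ a b : (P : Subgroup G), a * b = b * a

/-- `|G||_p`: the highest power of `p` dividing some element of `N(G)`. -/
noncomputable def maxPPart (G : Type*) [Group G] (p : ℕ) : ℕ :=
  sSup {m | (∃ k : ℕ, m = p ^ k) ∧ ∃ n ∈ indexSet G, m ∣ n}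

open scoped Classical in
/-- The natural action of `G ⧸ H` on an abelian normal subgroup `H`, induced by
conjugation (`h ↦ g * h * g⁻¹`); it is used to form the semidirect product `H ⋊ G/H`.
(Junk value — the trivial action — if `H` is not abelian; see `quotConj_eq` below.) -/
noncomputable def quotConj (G : Type*) [Group G] (H : Subgroup G) [H.Normal] :
    G ⧸ H →* MulAut ↥H :=
  if h : H ≤ (MulAut.conjNormal (H := H)).ker then
    QuotientGroup.lift H MulAut.conjNormal h
  else 1

/-- When `H` is abelian, `quotConj` is indeed the conjugation action `h ↦ g * h * g⁻¹`. -/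
theorem quotConj_eq (G : Type*) [Group G] (H : Subgroup G) [H.Normal]
    (hab : ∀ a b : ↥H, a * b = b * a) (g : G) :
    quotConj G H (g : G ⧸ H) = MulAut.conjNormal g := by
  have hker : H ≤ (MulAut.conjNormal (H := H)).ker := by
    intro x hx
    rw [MonoidHom.mem_ker]
    ext y
    have h2 : x * (y : G) = (y : G) * x := congrArg Subtype.val (hab ⟨x, hx⟩ y)
    simp only [MulAut.conjNormal_apply, MulAut.one_apply]
    rw [mul_inv_eq_iff_eq_mul]
    exact h2
  rw [quotConj, dif_pos hker]
  rfl

/-- The Fitting subgroup: the join of all normal nilpotent subgroups. -/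
def fitting (G : Type*) [Group G] : Subgroup G :=
  ⨆ H ∈ {H : Subgroup G | H.Normal ∧ Group.IsNilpotent ↥H}, H

instance fitting_normal (G : Type*) [Group G] : (fitting G).Normal := by
  constructor
  intro n hn g
  rw [fitting, iSup_subtype'] at hn ⊢
  refine Subgroup.iSup_induction _
    (C := fun x => g * x * g⁻¹ ∈
      ⨆ H : {H : Subgroup G | H.Normal ∧ Group.IsNilpotent ↥H}, (H : Subgroup G))
    hn (fun H x hx => ?_) ?_ (fun x y hx hy => ?_)
  · exact Subgroup.mem_iSup_of_mem H (H.2.1.conj_mem x hx g)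
  · simpa using Subgroup.one_mem _
  · have h2 := Subgroup.mul_mem _ hx hy
    have h3 : g * (x * y) * g⁻¹ = (g * x * g⁻¹) * (g * y * g⁻¹) := by group
    show g * (x * y) * g⁻¹ ∈ _
    rwa [h3]

/-!
In an `A`-group every nilpotent subgroup is abelian, and the join of two normal abelian subgroups
has class at most two, hence is abelian too; so `F = F(G)` is abelian. Split `F = A × B` into its
`p`-part and `p'`-part, both normal in `G`. As `B ⊴ F₂` has `p'`-order while `|F₂ : C_{F₂}(g)|` is
a power of `p`, `g` centralizes `B`. A Sylow `p`-subgroup `P ⊇ A` is abelian, so it centralizes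
`A`. For `x ∈ P`, the commutator `[x, g]` lies in the normal subgroups `C_G(A) ∋ x` and
`C_G(B) ∋ g`, hence in `C_G(F)`, which is contained in `F` because `G` is solvable. Thus `PF/F`
centralizes `gF`, and `|G/F : C(gF)|` divides `|G : P|`, which is prime to `p`.
-/

open Subgroup

section

open scoped commutatorElement

variable {G : Type*} [Group G]

theorem Subgroup.isNilpotent_of_commutator_le_centralizer {N : Subgroup G}
    (h : ⁅N, N⁆ ≤ centralizer N) : Group.IsNilpotent N := by
  refine isNilpotent_of_ker_le_center (Abelianization.of (G := N)) ?_
  rw [Abelianization.ker_of]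
  intro u hu
  have hu' : (u : G) ∈ ⁅N, N⁆ := N.map_subtype_commutator ▸ mem_map_of_mem N.subtype hu
  exact mem_center_iff.mpr fun t => Subtype.ext (h hu' t t.2)

theorem Subgroup.commutator_sup_le {H K : Subgroup G} [H.Normal] :
    ⁅H ⊔ K, H ⊔ K⁆ ≤ ⁅K, K⁆ ⊔ H := by
  have hmap : (H ⊔ K).map (QuotientGroup.mk' H) = K.map (QuotientGroup.mk' H) := by
    rw [map_sup, (map_eq_bot_iff _).mpr (QuotientGroup.ker_mk' H).ge, bot_sup_eq]
  calc ⁅H ⊔ K, H ⊔ K⁆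
      ≤ (⁅H ⊔ K, H ⊔ K⁆.map (QuotientGroup.mk' H)).comap (QuotientGroup.mk' H) :=
        le_comap_map _ _
    _ = ⁅K, K⁆ ⊔ H := by
        rw [map_commutator, hmap, ← map_commutator, comap_map_eq, QuotientGroup.ker_mk']

theorem Subgroup.commutatorElement_mem_centralizer_sup {A B : Subgroup G} [A.Normal] [B.Normal]
    {x g : G} (hx : x ∈ centralizer A) (hg : g ∈ centralizer B) :
    ⁅x, g⁆ ∈ centralizer (A ⊔ B : Subgroup G) := by
  have hA : ⁅x, g⁆ ∈ centralizer A :=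
    commutator_le_left _ ⊤ (commutator_mem_commutator hx (mem_top g))
  have hB : ⁅x, g⁆ ∈ centralizer B :=
    commutator_le_right ⊤ _ (commutator_mem_commutator (mem_top x) hg)
  refine le_centralizer_iff.mpr (sup_le ?_ ?_) (mem_zpowers ⁅x, g⁆)
  · exact le_centralizer_iff.mp (zpowers_le.mpr hA)
  · exact le_centralizer_iff.mp (zpowers_le.mpr hB)

theorem QuotientGroup.mk_mem_centralizer_of_commutatorElement_mem {N : Subgroup G} [N.Normal]
    {x g : G} (h : ⁅x, g⁆ ∈ N) : (x : G ⧸ N) ∈ centralizer {(g : G ⧸ N)} := by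
  rw [mem_centralizer_singleton_iff, ← commutatorElement_eq_one_iff_mul_comm]
  exact (QuotientGroup.eq_one_iff _).mpr h

theorem Subgroup.relIndex_dvd_index_of_normal_left {B C : Subgroup G} [B.Normal]
    [B.FiniteIndex] : C.relIndex B ∣ C.index := by
  have h1 := relIndex_mul_relIndex (C ⊓ B) B (B ⊔ C) inf_le_right le_sup_left
  have h2 := relIndex_mul_relIndex (C ⊓ B) C (B ⊔ C) inf_le_left le_sup_right
  rw [inf_relIndex_right, relIndex_sup_left] at h1
  rw [inf_relIndex_left, ← h1, mul_comm] at h2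
  have : B.IsFiniteRelIndex C := isFiniteRelIndex_of_finiteIndex
  rw [← Nat.eq_of_mul_eq_mul_right (Nat.pos_of_ne_zero relIndex_ne_zero) h2]
  exact relIndex_dvd_index_of_le le_sup_right

theorem Subgroup.le_of_coprime_card_index {B C : Subgroup G} [B.Normal] [B.FiniteIndex]
    (h : (Nat.card B).Coprime C.index) : B ≤ C :=
  relIndex_eq_one.mp <|
    Nat.eq_one_of_dvd_coprimes h (C.relIndex_dvd_card B) relIndex_dvd_index_of_normal_left

theorem Subgroup.mem_centralizer_of_index_centralizer_eq_prime_pow [Finite G]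
    {H B : Subgroup G} [B.Normal] (hBH : B ≤ H) {p k : ℕ} (hp : p.Prime)
    (hB : ¬ p ∣ Nat.card B) {g : H} (hind : (centralizer {g}).index = p ^ k) :
    (g : G) ∈ centralizer B := by
  have hcard : Nat.card (B.subgroupOf H) = Nat.card B :=
    Nat.card_congr (subgroupOfEquivOfLe hBH).toEquiv
  have hle : B.subgroupOf H ≤ centralizer {g} := le_of_coprime_card_index <| by
    rw [hind, hcard]
    exact ((Nat.Prime.coprime_iff_not_dvd hp).mpr hB).symm.pow_right k
  exact fun b hb => congrArg Subtype.val
    (mem_centralizer_singleton_iff.mp (hle (x := ⟨b, hBH hb⟩) hb))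

theorem exists_mul_eq_of_pow_mul_eq_one {x : G} {a b : ℕ} (hab : a.Coprime b)
    (hx : x ^ (a * b) = 1) :
    ∃ u ∈ zpowers x, ∃ v ∈ zpowers x, u ^ a = 1 ∧ v ^ b = 1 ∧ u * v = x := by
  obtain ⟨s, t, hst⟩ := hab.isCoprime
  have hx' : ∀ m : ℤ, x ^ ((a * b : ℕ) * m) = 1 := fun m => by
    rw [zpow_mul, zpow_natCast, hx, one_zpow]
  refine ⟨x ^ (t * b), zpow_mem_zpowers _ _, x ^ (s * a), zpow_mem_zpowers _ _, ?_, ?_, ?_⟩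
  · rw [← zpow_natCast, ← zpow_mul, ← hx' t]; push_cast; ring_nf
  · rw [← zpow_natCast, ← zpow_mul, ← hx' s]; push_cast; ring_nf
  · rw [← zpow_add, add_comm, hst, zpow_one]

namespace Subgroup

def torsionBy (N : Subgroup G) (hN : N ≤ centralizer N) (n : ℕ) : Subgroup G where
  carrier := {x | x ∈ N ∧ x ^ n = 1}
  one_mem' := ⟨N.one_mem, one_pow n⟩
  mul_mem' := fun {x y} ⟨hx, hxn⟩ ⟨hy, hyn⟩ =>
    ⟨N.mul_mem hx hy, by rw [Commute.mul_pow (hN hy x hx), hxn, hyn, one_mul]⟩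
  inv_mem' := fun ⟨hx, hxn⟩ => ⟨N.inv_mem hx, by rw [inv_pow, hxn, inv_one]⟩

variable {N : Subgroup G} (hN : N ≤ centralizer N)

instance torsionBy_normal [hNn : N.Normal] (n : ℕ) : (N.torsionBy hN n).Normal where
  conj_mem x := fun ⟨hx, hxn⟩ g =>
    ⟨hNn.conj_mem x hx g, by rw [conj_pow, hxn, mul_one, mul_inv_cancel]⟩

theorem isPGroup_torsionBy_pow (p k : ℕ) : IsPGroup p (N.torsionBy hN (p ^ k)) :=
  fun x => ⟨k, Subtype.ext x.2.2⟩

theorem not_dvd_card_torsionBy [Finite G] {p m : ℕ} [Fact p.Prime] (hpm : ¬ p ∣ m) :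
    ¬ p ∣ Nat.card (N.torsionBy hN m) := fun hp => by
  obtain ⟨x, hx⟩ := exists_prime_orderOf_dvd_card' p hp
  exact hpm (hx ▸ orderOf_dvd_of_pow_eq_one (Subtype.ext x.2.2))

theorem le_torsionBy_sup_torsionBy {a b : ℕ} (hab : a.Coprime b)
    (hNab : ∀ x ∈ N, x ^ (a * b) = 1) : N ≤ N.torsionBy hN a ⊔ N.torsionBy hN b := by
  intro x hx
  obtain ⟨u, hu, v, hv, hua, hvb, rfl⟩ := exists_mul_eq_of_pow_mul_eq_one hab (hNab x hx)
  have hzp : zpowers (u * v) ≤ N := zpowers_le.mpr hx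
  exact mul_mem (mem_sup_left ⟨hzp hu, hua⟩) (mem_sup_right ⟨hzp hv, hvb⟩)

end Subgroup

theorem le_fitting {N : Subgroup G} [hN : N.Normal] (hnil : Group.IsNilpotent N) :
    N ≤ fitting G :=
  le_iSup₂ (f := fun H (_ : H ∈ {H : Subgroup G | H.Normal ∧ Group.IsNilpotent H}) => H)
    N ⟨hN, hnil⟩

theorem le_fitting_of_commutator_le {N : Subgroup G} [N.Normal]
    (hC : N ≤ centralizer (fitting G)) (hF : ⁅N, N⁆ ≤ fitting G) : N ≤ fitting G :=
  le_fitting (isNilpotent_of_commutator_le_centralizer (hF.trans (le_centralizer_iff.mp hC)))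

theorem centralizer_fitting_le [Group.IsSolvable G] : centralizer (fitting G) ≤ fitting G := by
  obtain ⟨n, hn⟩ := Group.IsSolvable.solvable (G := G)
  suffices ∀ k ≤ n, derivedSeries G k ⊓ centralizer (fitting G) ≤ fitting G by
    simpa using this 0 n.zero_le
  intro k hk
  induction hk using Nat.decreasingInduction with
  | self => simp [hn]
  | of_succ k _ ih =>
    refine le_fitting_of_commutator_le inf_le_right (le_trans (le_inf ?_ ?_) ih)
    · exact derivedSeries_succ G k ▸ commutator_mono inf_le_left inf_le_left
    · exact (commutator_le_self _).trans inf_le_right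

namespace IsAGroup

theorem le_centralizer_of_isPGroup (hA : IsAGroup G) {p : ℕ} (hp : p.Prime) {H : Subgroup G}
    (hH : IsPGroup p H) : H ≤ centralizer H := by
  obtain ⟨P, hHP⟩ := hH.exists_le_sylow
  intro a ha b hb
  exact congrArg Subtype.val (hA p hp P ⟨b, hHP hb⟩ ⟨a, hHP ha⟩)

variable [Finite G]

theorem le_centralizer_of_isNilpotent (hA : IsAGroup G) {N : Subgroup G}
    (hN : Group.IsNilpotent N) : N ≤ centralizer N := by
  obtain ⟨e⟩ := (Group.isNilpotent_of_finite_tfae.out 0 4).mp hN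
  have hcomm : ∀ u v : ((q : (Nat.card N).primeFactors) → (P : Sylow q N) → P), Commute u v :=
    fun u v => funext fun q => funext fun P => Subtype.ext <| Subtype.ext <|
      hA.le_centralizer_of_isPGroup (Nat.prime_of_mem_primeFactors q.2) (P.2.map N.subtype)
        (mem_map_of_mem _ (v q P).2) _ (mem_map_of_mem _ (u q P).2)
  intro a ha b hb
  simpa using congrArg Subtype.val ((hcomm (e.symm ⟨b, hb⟩) (e.symm ⟨a, ha⟩)).map e)

theorem le_centralizer_of_isNilpotent_of_normal (hA : IsAGroup G) {H K : Subgroup G}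
    [H.Normal] [K.Normal] (hH : Group.IsNilpotent H) (hK : Group.IsNilpotent K) :
    H ≤ centralizer K := by
  have hHc := hA.le_centralizer_of_isNilpotent hH
  have hKc := hA.le_centralizer_of_isNilpotent hK
  have hcomm : ⁅H ⊔ K, H ⊔ K⁆ ≤ H ⊓ K := by
    refine le_inf ?_ ?_
    · simpa [commutator_eq_bot_iff_le_centralizer.mpr hKc] using commutator_sup_le (K := K)
    · simpa [sup_comm, commutator_eq_bot_iff_le_centralizer.mpr hHc] using
        commutator_sup_le (H := K) (K := H)
  have hcentral : H ⊓ K ≤ centralizer (H ⊔ K : Subgroup G) := le_centralizer_iff.mp <| sup_le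
    (hHc.trans (centralizer_le inf_le_left)) (hKc.trans (centralizer_le inf_le_right))
  have hsup := hA.le_centralizer_of_isNilpotent
    (isNilpotent_of_commutator_le_centralizer (hcomm.trans hcentral))
  exact fun h hh k hk => hsup (mem_sup_left hh) k (mem_sup_right hk)

theorem fitting_le_centralizer (hA : IsAGroup G) : fitting G ≤ centralizer (fitting G) := by
  refine iSup₂_le fun H ⟨_, hH⟩ => le_centralizer_iff.mpr (iSup₂_le fun K ⟨_, hK⟩ => ?_)
  exact hA.le_centralizer_of_isNilpotent_of_normal hK hH

end IsAGroup

end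

/-- Let `G` be a finite solvable `A`-group, `p` a prime, `F = F(G)` and
`F₂ = F₂(G)` the second Fitting subgroup (the preimage in `G` of `F(G/F)`). If `g ∈ F₂`
is such that `Ind(F₂, g)` is a power of `p`, then `p` does not divide `Ind(G/F, gF)`. -/
theorem stmt_16 (G : Type*) [Group G] [Finite G] [Group.IsSolvable G] (hA : IsAGroup G)
    (p : ℕ) (hp : p.Prime)
    (g : G) (hg : g ∈ (fitting (G ⧸ fitting G)).comap (QuotientGroup.mk' (fitting G)))
    (hind : ∃ k : ℕ, (Subgroup.centralizer
        {(⟨g, hg⟩ : ↥((fitting (G ⧸ fitting G)).comap (QuotientGroup.mk' (fitting G))))}).index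
      = p ^ k) :
    ¬ p ∣ (Subgroup.centralizer {(g : G ⧸ fitting G)}).index := by
  have : Fact p.Prime := ⟨hp⟩
  set F := fitting G
  have hFab : F ≤ centralizer F := hA.fitting_le_centralizer
  have hn : Nat.card G ≠ 0 := Nat.card_pos.ne'
  set A := F.torsionBy hFab (ordProj[p] (Nat.card G))
  set B := F.torsionBy hFab (ordCompl[p] (Nat.card G))
  have hFAB : F ≤ A ⊔ B :=
    F.le_torsionBy_sup_torsionBy hFab ((Nat.coprime_ordCompl hp hn).pow_left _) fun x _ => by
      rw [Nat.ordProj_mul_ordCompl_eq_self]; exact pow_card_eq_one'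
  have hBF₂ : B ≤ (fitting (G ⧸ F)).comap (QuotientGroup.mk' F) := fun b (hb : b ∈ B) =>
    (QuotientGroup.ker_mk' F).ge.trans (MonoidHom.ker_le_comap _ _) hb.1
  obtain ⟨k, hk⟩ := hind
  have hgB : g ∈ centralizer B := mem_centralizer_of_index_centralizer_eq_prime_pow hBF₂ hp
    (F.not_dvd_card_torsionBy hFab (Nat.not_dvd_ordCompl hp hn)) hk
  obtain ⟨P, hAP⟩ := (F.isPGroup_torsionBy_pow hFab p _).exists_le_sylow
  have hPg : (P : Subgroup G).map (QuotientGroup.mk' F) ≤ centralizer {(g : G ⧸ F)} := by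
    rintro _ ⟨x, hx, rfl⟩
    have hxA : x ∈ centralizer A :=
      centralizer_le hAP (hA.le_centralizer_of_isPGroup hp P.isPGroup' hx)
    exact QuotientGroup.mk_mem_centralizer_of_commutatorElement_mem <| centralizer_fitting_le <|
      centralizer_le hFAB (commutatorElement_mem_centralizer_sup hxA hgB)
  intro hdvd
  exact P.not_dvd_index <| hdvd.trans <|
    (index_dvd_of_le hPg).trans (index_map_dvd _ (QuotientGroup.mk'_surjective F))
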